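/- On a compact Riemann surface M, if L is a holomorphic line bundle with c¹(L) ≠ 0 (nonzero degree), then the rank-2 bundle E = L ⊕ L* does not admit a holomorphic connection, even though c¹(E) = 0. (Proof: a holomorphic connection ∇ on E would induce, via the composition π∘∇∘ι with ι : L → E the inclusion and π : Ω¹⊗E → Ω¹⊗L the projection, a holomorphic connection on L, forcing deg L = 0.) -/
import Mathlib


/-! STATEMENT 16: On a compact Riemann surface M, if L is a holomorphic line
bundle with c¹(L) ≠ 0 (deg L ≠ 0), then E = L ⊕ L* admits no holomorphic
connection (even though c¹(E) = 0).

Model (as in the sheaf-theoretic picture): `O` = holomorphic functions, `Ω` = Ω¹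
with differential `d`; `L`, `Ld` are the (sheaves of sections of) L and L*, with
Ω¹⊗L = `ΩL`, Ω¹⊗L* = `ΩLd` and tensor pairings `tL`, `tLd`.  A holomorphic
connection on L (resp. on E = L × Ld) is a ℂ-linear map satisfying the Leibniz
rule.  The inclusion ι : L → E is s ↦ (s,0) and π : Ω¹⊗E → Ω¹⊗L the projection;
composing a holomorphic connection on E with these yields one on L.
`H17` is the context fact that a line bundle admitting a holomorphic connection
has degree zero.  Conclusion: since deg L ≠ 0, E admits no holomorphic
connection. -/
theorem no_holomorphic_connection_on_L_oplus_Ldual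
    {O Ω L Ld ΩL ΩLd : Type*} [CommRing O] [Algebra ℂ O]
    [AddCommGroup Ω] [Module O Ω] [Module ℂ Ω]
    [AddCommGroup L] [Module O L] [Module ℂ L] [IsScalarTower ℂ O L]
    [AddCommGroup Ld] [Module O Ld] [Module ℂ Ld] [IsScalarTower ℂ O Ld]
    [AddCommGroup ΩL] [Module O ΩL] [Module ℂ ΩL] [IsScalarTower ℂ O ΩL]
    [AddCommGroup ΩLd] [Module O ΩLd] [Module ℂ ΩLd] [IsScalarTower ℂ O ΩLd]
    (d : O →ₗ[ℂ] Ω)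
    (tL : Ω →ₗ[O] L →ₗ[O] ΩL) (tLd : Ω →ₗ[O] Ld →ₗ[O] ΩLd)
    (degL : ℤ) (hdegL : degL ≠ 0)
    -- a line bundle on a compact Riemann surface with a holomorphic connection
    -- has degree zero (vanishing first Atiyah/Chern class)
    (H17 : (∃ D : L →ₗ[ℂ] ΩL,
        ∀ (f : O) (s : L), D (f • s) = tL (d f) s + f • D s) → degL = 0) :
    ¬ ∃ D : (L × Ld) →ₗ[ℂ] (ΩL × ΩLd),
        ∀ (f : O) (s : L × Ld),
          D (f • s) = (tL (d f) s.1, tLd (d f) s.2) + f • D s := by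
  rintro ⟨D, hD⟩
  apply hdegL
  apply H17
  refine ⟨(LinearMap.fst ℂ ΩL ΩLd).comp (D.comp (LinearMap.inl ℂ L Ld)), ?_⟩
  intro f s
  have h := hD f (s, 0)
  simp only [Prod.smul_mk, smul_zero] at h
  simp [h]
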